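/- arXiv:2203.16139 — 3 statements merged into one kernel-verified Lean document; each statement's English description precedes it below -/
import Mathlib

section
/- The modular function of a finite-dimensional Lie ∞-algebra equals the divergence of its homological vector field: ω_E = div(Q_E), where ω_E^{(k)}(x₁,…,x_k) = str(l_{k+1}(x₁,…,x_k, −)) for homogeneous arguments whose degrees sum to −1. -/
open scoped BigOperators

noncomputable section

/-- The Koszul sign of a permutation `σ` acting on homogeneous elements whose
degrees are given by `d`. -/
def koszulSign (K : Type*) [Field K] {n : ℕ} (σ : Equiv.Perm (Fin n)) (d : Fin n → ℤ) : K :=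
  ∏ p ∈ Finset.univ.filter (fun p : Fin n × Fin n => p.1 < p.2 ∧ σ p.2 < σ p.1),
    (-1 : K) ^ (d (σ p.1) * d (σ p.2))

/-- `σ` is an `(i, n-i)`-unshuffle. -/
def IsUnshuffle {n : ℕ} (i : ℕ) (σ : Equiv.Perm (Fin n)) : Prop :=
  (∀ a b : Fin n, a < b → (b : ℕ) < i → σ a < σ b) ∧
  (∀ a b : Fin n, a < b → i ≤ (a : ℕ) → σ a < σ b)

instance {n : ℕ} (i : ℕ) (σ : Equiv.Perm (Fin n)) : Decidable (IsUnshuffle i σ) := by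
  unfold IsUnshuffle; infer_instance

/-- The nested term `Φ_{n-i+1}(l_{i}(x_{σ(1)},…,x_{σ(i)}), x_{σ(i+1)},…,x_{σ(n)})`
appearing in the generalized Jacobi identities (here the arity of the inner bracket
is `i.1 + 1`). -/
def nestedTerm {K : Type*} [Field K] {E W : Type*} [AddCommGroup E] [Module K E]
    [AddCommGroup W] [Module K W]
    (l : ∀ n : ℕ, MultilinearMap K (fun _ : Fin n => E) E)
    (Φ : ∀ n : ℕ, MultilinearMap K (fun _ : Fin n => E) W)
    (n : ℕ) (i : Fin n) (σ : Equiv.Perm (Fin n)) (x : Fin n → E) : W :=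
  Φ ((n - (i.1 + 1)) + 1)
    (Fin.cons (l (i.1 + 1) (fun a => x (σ (Fin.castLE i.isLt a))))
      (fun a : Fin (n - (i.1 + 1)) =>
        x (σ ⟨(i.1 + 1) + a.1, by have := a.isLt; have := i.isLt; omega⟩)))

/-- A symmetric Lie `∞`-algebra structure on a `ℤ`-graded vector space, the grading
being given by an (internal) family of subspaces `𝒜`: a family of
graded-symmetric multilinear brackets of degree `+1` satisfying the generalized
Jacobi identities. -/
structure GradedLieInfty (K : Type*) [Field K] (E : Type*) [AddCommGroup E] [Module K E]
    (𝒜 : ℤ → Submodule K E) where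
  l : ∀ n : ℕ, MultilinearMap K (fun _ : Fin n => E) E
  deg : ∀ (n : ℕ), 1 ≤ n → ∀ (d : Fin n → ℤ) (x : Fin n → E),
    (∀ a, x a ∈ 𝒜 (d a)) → l n x ∈ 𝒜 ((∑ a, d a) + 1)
  symm : ∀ (n : ℕ), 1 ≤ n → ∀ (σ : Equiv.Perm (Fin n)) (d : Fin n → ℤ) (x : Fin n → E),
    (∀ a, x a ∈ 𝒜 (d a)) → l n (fun a => x (σ a)) = koszulSign K σ d • l n x
  jacobi : ∀ (n : ℕ), 1 ≤ n → ∀ (d : Fin n → ℤ) (x : Fin n → E),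
    (∀ a, x a ∈ 𝒜 (d a)) →
    ∑ i : Fin n,
      ∑ σ ∈ Finset.univ.filter (fun σ : Equiv.Perm (Fin n) => IsUnshuffle (i.1 + 1) σ),
        koszulSign K σ d • nestedTerm l l n i σ x = 0

/-- The degree-`0` block of an endomorphism of a graded vector space. -/
def gradedPiece {K : Type*} [Field K] {E : Type*} [AddCommGroup E] [Module K E]
    (𝒜 : ℤ → Submodule K E) [DirectSum.Decomposition 𝒜] (f : E →ₗ[K] E) (i : ℤ) :
    𝒜 i →ₗ[K] 𝒜 i :=
  (DirectSum.component K ℤ (fun j => 𝒜 j) i).comp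
    ((DirectSum.decomposeLinearEquiv 𝒜).toLinearMap.comp (f.comp (𝒜 i).subtype))

/-- The supertrace of an endomorphism of a graded vector space: the alternating sum
of the traces of its diagonal blocks. -/
def str (K : Type*) [Field K] {E : Type*} [AddCommGroup E] [Module K E]
    (𝒜 : ℤ → Submodule K E) [DirectSum.Decomposition 𝒜] (f : E →ₗ[K] E) : K :=
  ∑ᶠ i : ℤ, (-1 : K) ^ i * LinearMap.trace K (𝒜 i) (gradedPiece 𝒜 f i)

/-! Since `l_{k+1}` has degree `+1` and `∑ |x_a| = -1`, the map `f = l_{k+1}(x₁,…,x_k,−)`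
preserves degrees. For such an `f` and any basis `(b j)` with degrees `deg j` that `f` maps
degree-wise, the trace of the `i`-th diagonal block of `f` is the sum of the diagonal matrix
entries `ξ^j(f(b j))` over `deg j = i`; the alternating sum of these block traces is
`∑_j (-1)^{deg j} ξ^j(l_{k+1}(x₁,…,x_k,b j))`, the arity-`k` component of `div Q_E`. -/

open Module

section GradedTrace

variable {K : Type*} [Field K] {E : Type*} [AddCommGroup E] [Module K E]
  {𝒜 : ℤ → Submodule K E} [DirectSum.Decomposition 𝒜]
  {ι : Type*} [Fintype ι] (b : Basis ι K E) (deg : ι → ℤ) {f : E →ₗ[K] E}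

theorem trace_gradedPiece (hf : ∀ j, f (b j) ∈ 𝒜 (deg j)) (i : ℤ) :
    LinearMap.trace K (𝒜 i) (gradedPiece 𝒜 f i) = ∑ j with deg j = i, b.coord j (f (b j)) := by
  classical
  have := Module.Finite.of_basis b
  set P : E →ₗ[K] 𝒜 i := DirectSum.component K ℤ (fun j => 𝒜 j) i ∘ₗ
    (DirectSum.decomposeLinearEquiv 𝒜).toLinearMap ∘ₗ f
  have hP : gradedPiece 𝒜 f i = P ∘ₗ (𝒜 i).subtype := rfl
  rw [hP, LinearMap.trace_comp_comm', LinearMap.trace_eq_matrix_trace K b, Matrix.trace,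
    Finset.sum_filter]
  refine Finset.sum_congr rfl fun j _ => ?_
  have hPb : (𝒜 i).subtype (P (b j)) = DirectSum.decompose 𝒜 (f (b j)) i := rfl
  rw [Matrix.diag_apply, LinearMap.toMatrix_apply, LinearMap.comp_apply, hPb]
  split_ifs with h
  · subst h
    rw [DirectSum.decompose_of_mem_same 𝒜 (hf j)]
    rfl
  · rw [DirectSum.decompose_of_mem_ne 𝒜 (hf j) h, map_zero, Finsupp.zero_apply]

theorem str_eq_sum_basis (hf : ∀ j, f (b j) ∈ 𝒜 (deg j)) :
    str K 𝒜 f = ∑ j, (-1 : K) ^ deg j * b.coord j (f (b j)) := by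
  classical
  calc str K 𝒜 f = ∑ᶠ i : ℤ, ∑ j with deg j = i, (-1 : K) ^ deg j * b.coord j (f (b j)) := by
        refine finsum_congr fun i => ?_
        rw [trace_gradedPiece b deg hf, Finset.mul_sum]
        exact Finset.sum_congr rfl fun j hj => by rw [(Finset.mem_filter.1 hj).2]
    _ = _ := finsum_sum_filter deg _ _

end GradedTrace

theorem MultilinearMap.toLinearMap_snoc_last {R M N : Type*} [CommSemiring R] [AddCommMonoid M]
    [Module R M] [AddCommMonoid N] [Module R N] {n : ℕ}
    (g : MultilinearMap R (fun _ : Fin (n + 1) => M) N) (x : Fin n → M) (y v : M) :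
    g.toLinearMap (Fin.snoc x y) (Fin.last n) v = g (Fin.snoc x v) := by
  rw [MultilinearMap.toLinearMap_apply, Fin.update_snoc_last]

theorem GradedLieInfty.l_snoc_mem {K : Type*} [Field K] {E : Type*} [AddCommGroup E]
    [Module K E] {𝒜 : ℤ → Submodule K E} (L : GradedLieInfty K E 𝒜) {k : ℕ} {d : Fin k → ℤ}
    {x : Fin k → E} (hx : ∀ a, x a ∈ 𝒜 (d a)) {e : ℤ} {v : E} (hv : v ∈ 𝒜 e) :
    L.l (k + 1) (Fin.snoc x v) ∈ 𝒜 ((∑ a, d a) + e + 1) := by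
  have hxv : ∀ a, Fin.snoc (α := fun _ => E) x v a ∈ 𝒜 (Fin.snoc (α := fun _ => ℤ) d e a) :=
    Fin.lastCases (by simpa using hv) (fun a => by simpa using hx a)
  simpa [Fin.sum_snoc] using L.deg (k + 1) (Nat.le_add_left 1 k) _ _ hxv

theorem stmt8_general (K : Type) [Field K] (E : Type) [AddCommGroup E] [Module K E]
    (𝒜 : ℤ → Submodule K E) [DirectSum.Decomposition 𝒜]
    (L : GradedLieInfty K E 𝒜)
    (ι : Type) [Fintype ι] (b : Module.Basis ι K E) (deg : ι → ℤ)
    (hb : ∀ j : ι, b j ∈ 𝒜 (deg j))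
    (k : ℕ) (d : Fin k → ℤ) (x : Fin k → E)
    (hx : ∀ a, x a ∈ 𝒜 (d a)) (hsum : ∑ a, d a = -1) :
    str K 𝒜 ((L.l (k + 1)).toLinearMap (Fin.snoc x 0) (Fin.last k))
      = ∑ j : ι, (-1 : K) ^ (deg j) * b.coord j (L.l (k + 1) (Fin.snoc x (b j))) := by
  have hf : ∀ j, (L.l (k + 1)).toLinearMap (Fin.snoc x 0) (Fin.last k) (b j) ∈ 𝒜 (deg j) :=
    fun j => by
      rw [MultilinearMap.toLinearMap_snoc_last]
      simpa [hsum] using L.l_snoc_mem hx (hb j)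
  simp only [str_eq_sum_basis b deg hf, MultilinearMap.toLinearMap_snoc_last]

/-- the modular function of a finite-dimensional Lie `∞`-algebra
equals the divergence of its homological vector field `Q_E`.  In a homogeneous
basis `(b j)` with degrees `deg j` and dual coordinates `b.coord j`, the arity-`k`
component of the divergence of `Q_E` evaluated on a homogeneous tuple
`x₁ ⊙ … ⊙ x_k` of total degree `-1` is
`∑_j (-1)^{|x_j|} ⟨ξ^j, l_{k+1}(x₁,…,x_k,x_j)⟩`, and the modular function is
`ω^{(k)}(x₁,…,x_k) = str (l_{k+1}(x₁,…,x_k,−))`. -/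
theorem stmt8 (K : Type) [Field K] [CharZero K] (E : Type) [AddCommGroup E] [Module K E]
    [FiniteDimensional K E] (𝒜 : ℤ → Submodule K E) [DirectSum.Decomposition 𝒜]
    (L : GradedLieInfty K E 𝒜)
    (ι : Type) [Fintype ι] [DecidableEq ι] (b : Module.Basis ι K E) (deg : ι → ℤ)
    (hb : ∀ j : ι, b j ∈ 𝒜 (deg j))
    (k : ℕ) (d : Fin k → ℤ) (x : Fin k → E)
    (hx : ∀ a, x a ∈ 𝒜 (d a)) (hsum : ∑ a, d a = -1) :
    str K 𝒜 ((L.l (k + 1)).toLinearMap (Fin.snoc x 0) (Fin.last k))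
      = ∑ j : ι, (-1 : K) ^ (deg j) * b.coord j (L.l (k + 1) (Fin.snoc x (b j))) :=
  stmt8_general K E 𝒜 L ι b deg hb k d x hx hsum

end
end

section
/- For a finite-dimensional Lie ∞-algebra E, the modular function of the graded Lie algebra H•(E, l₁) agrees with the modular function of E on degree −1 cocycles: ω_{H(E,l₁)}([x]) = ω_E(x) for all x ∈ E_{−1} with l₁(x) = 0. -/
open scoped BigOperators

noncomputable section

/-!
The Jacobi identities in arities one and two say that `l₁ ∘ l₁ = 0` and, because `l₁ x = 0`,
that `ad_x = l₂(x, -)` commutes with `l₁`; so `ad_x` is a degree-`0` chain map and `β` is the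
map it induces in cohomology. The trace is additive along short exact sequences, and the
sequences `0 → Zⁱ → Eⁱ → Bⁱ⁺¹ → 0` (the last map being `l₁`) and `0 → Bⁱ → Zⁱ → Hⁱ → 0` give
`tr(ad_x|Eⁱ) = tr(β|Hⁱ) + tr(ad_x|Bⁱ) + tr(ad_x|Bⁱ⁺¹)`. The boundary terms cancel in the
alternating sum over `i`.
-/

open LinearMap

namespace LinearMap

variable {K : Type*} [Field K] {U V W : Type*} [AddCommGroup U] [Module K U]
  [AddCommGroup V] [Module K V] [AddCommGroup W] [Module K W]

theorem trace_eq_add_of_exact [FiniteDimensional K V]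
    {ι : U →ₗ[K] V} {π : V →ₗ[K] W} (hι : Function.Injective ι) (hπ : Function.Surjective π)
    (hexact : Function.Exact ι π) {h : U →ₗ[K] U} {f : V →ₗ[K] V} {g : W →ₗ[K] W}
    (hιf : ι ∘ₗ h = f ∘ₗ ι) (hπf : π ∘ₗ f = g ∘ₗ π) :
    trace K V f = trace K U h + trace K W g := by
  have : FiniteDimensional K U := Module.Finite.of_injective ι hι
  have : FiniteDimensional K W := Module.Finite.of_surjective π hπ
  obtain ⟨s, hs⟩ := π.exists_rightInverse_of_surjective (range_eq_top.mpr hπ)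
  obtain ⟨r, hιr⟩ : ∃ r : V →ₗ[K] U, ι ∘ₗ r + s ∘ₗ π = id := by
    have hmem : ∀ v, v - s (π v) ∈ range ι := fun v => (hexact _).mp <| by
      rw [map_sub, ← comp_apply π s, hs, id_apply, sub_self]
    refine ⟨(LinearEquiv.ofInjective ι hι).symm.toLinearMap ∘ₗ
      codRestrict (range ι) (id - s ∘ₗ π) hmem, ?_⟩
    ext v
    simp [LinearEquiv.ofInjective_symm_apply]
  have hrι : r ∘ₗ ι = id := by
    ext u
    apply hι
    simpa [hexact.apply_apply_eq_zero] using congr($hιr (ι u))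
  calc trace K V f = trace K V ((f ∘ₗ ι) ∘ₗ r) + trace K V ((f ∘ₗ s) ∘ₗ π) := by
        rw [← map_add, comp_assoc, comp_assoc, ← comp_add, hιr, comp_id]
    _ = trace K U (r ∘ₗ f ∘ₗ ι) + trace K W (π ∘ₗ f ∘ₗ s) := by
        congr 1 <;> exact trace_comp_comm' _ _
    _ = trace K U h + trace K W g := by
        rw [← hιf, ← comp_assoc, hrι, id_comp, ← comp_assoc, hπf, comp_assoc, hs, comp_id]

end LinearMap

theorem finsum_add_sub_succ {M : Type*} [AddCommGroup M] {f c : ℤ → M}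
    (hf : (Function.support f).Finite) (hc : (Function.support c).Finite) :
    ∑ᶠ i, (f i + (c i - c (i + 1))) = ∑ᶠ i, f i := by
  have hc' : (Function.support fun i => c (i + 1)).Finite :=
    hc.preimage (add_left_injective 1).injOn
  have hshift : ∑ᶠ i, c (i + 1) = ∑ᶠ i, c i := finsum_comp_equiv (Equiv.addRight 1)
  rw [finsum_add_distrib hf ((hc.union hc').subset (Function.support_sub _ _)),
    finsum_sub_distrib hc hc', hshift, sub_self, add_zero]

section Graded

variable {K : Type*} [Field K] {E : Type*} [AddCommGroup E] [Module K E]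
  (𝒜 : ℤ → Submodule K E) [DirectSum.Decomposition 𝒜]

theorem gradedPiece_eq_restrict (f : E →ₗ[K] E) {i : ℤ} (hf : ∀ v ∈ 𝒜 i, f v ∈ 𝒜 i) :
    gradedPiece 𝒜 f i = f.restrict hf := by
  ext v
  exact DirectSum.decompose_of_mem_same 𝒜 (hf v v.2)

theorem str_eq_finsum_trace_restrict (f : E →ₗ[K] E) (hf : ∀ i, ∀ v ∈ 𝒜 i, f v ∈ 𝒜 i) :
    str K 𝒜 f = ∑ᶠ i, (-1 : K) ^ i * trace K (𝒜 i) (f.restrict (hf i)) := by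
  unfold str
  exact finsum_congr fun i => by rw [gradedPiece_eq_restrict]

theorem finite_support_trace_of_le [FiniteDimensional K E] {p : ℤ → Submodule K E}
    (hp : ∀ i, p i ≤ 𝒜 i) (a : ℤ → K) (g : ∀ i, p i →ₗ[K] p i) :
    (Function.support fun i => a i * trace K (p i) (g i)).Finite := by
  refine (WellFoundedGT.finite_ne_bot_of_iSupIndep
    (DirectSum.Decomposition.isInternal 𝒜).submodule_iSupIndep).subset fun i hi h𝒜 => hi ?_
  have : Subsingleton (p i) := Submodule.subsingleton_iff_eq_bot.mpr (le_bot_iff.mp (h𝒜 ▸ hp i))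
  show a i * _ = 0
  rw [Subsingleton.elim (g i) 0, map_zero, mul_zero]

theorem decompose_succ_apply_of_degree_one {d : E →ₗ[K] E}
    (hd : ∀ i, ∀ v ∈ 𝒜 i, d v ∈ 𝒜 (i + 1)) (w : E) (i : ℤ) :
    (DirectSum.decompose 𝒜 (d w) (i + 1) : E) = d (DirectSum.decompose 𝒜 w i) := by
  induction w using DirectSum.Decomposition.inductionOn 𝒜 with
  | zero => simp
  | @homogeneous j v =>
    obtain ⟨v, hv⟩ := v
    by_cases hji : j = i
    · subst hji
      rw [DirectSum.decompose_of_mem_same 𝒜 hv, DirectSum.decompose_of_mem_same 𝒜 (hd j v hv)]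
    · rw [DirectSum.decompose_of_mem_ne 𝒜 hv hji,
        DirectSum.decompose_of_mem_ne 𝒜 (hd j v hv) (by omega), map_zero]
  | add a b ha hb => simp [ha, hb]

end Graded

section ChainMap

variable {K : Type*} [Field K] {E : Type*} [AddCommGroup E] [Module K E]
  {𝒜 : ℤ → Submodule K E} {d f : E →ₗ[K] E}
  {𝒜H : ℤ → Submodule K (ker d ⧸ (range d).comap (ker d).subtype)}
  {β : (ker d ⧸ (range d).comap (ker d).subtype) →ₗ[K] (ker d ⧸ (range d).comap (ker d).subtype)}

theorem mapsTo_inf_ker (hf : ∀ i, ∀ v ∈ 𝒜 i, f v ∈ 𝒜 i) (hdf : d ∘ₗ f = f ∘ₗ d) (i : ℤ) :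
    ∀ v ∈ 𝒜 i ⊓ ker d, f v ∈ 𝒜 i ⊓ ker d := by
  intro v hv
  rw [Submodule.mem_inf, mem_ker] at hv ⊢
  exact ⟨hf i v hv.1, by rw [← comp_apply, hdf, comp_apply, hv.2, map_zero]⟩

theorem mapsTo_inf_range (hf : ∀ i, ∀ v ∈ 𝒜 i, f v ∈ 𝒜 i) (hdf : d ∘ₗ f = f ∘ₗ d) (i : ℤ) :
    ∀ v ∈ 𝒜 i ⊓ range d, f v ∈ 𝒜 i ⊓ range d := by
  rintro _ ⟨hv, w, rfl⟩
  exact ⟨hf i _ hv, f w, by rw [← comp_apply, hdf, comp_apply]⟩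

theorem mapsTo_homology (hf : ∀ i, ∀ v ∈ 𝒜 i, f v ∈ 𝒜 i) (hdf : d ∘ₗ f = f ∘ₗ d)
    (h𝒜H : ∀ i, 𝒜H i =
      ((𝒜 i ⊓ ker d).comap (ker d).subtype).map ((range d).comap (ker d).subtype).mkQ)
    (hβ : ∀ (y : E) (hy : y ∈ ker d) (hy' : f y ∈ ker d),
      β (Submodule.Quotient.mk ⟨y, hy⟩) = Submodule.Quotient.mk ⟨f y, hy'⟩) (i : ℤ) :
    ∀ u ∈ 𝒜H i, β u ∈ 𝒜H i := by
  simp_rw [h𝒜H i]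
  rintro _ ⟨⟨y, hy⟩, hyi, rfl⟩
  have hfy := mapsTo_inf_ker hf hdf i y hyi
  exact ⟨⟨f y, hfy.2⟩, hfy, (hβ y hy hfy.2).symm⟩

theorem trace_cycles_eq_trace_boundaries_add_trace_homology (hd2 : d ∘ₗ d = 0)
    (hf : ∀ i, ∀ v ∈ 𝒜 i, f v ∈ 𝒜 i) (hdf : d ∘ₗ f = f ∘ₗ d)
    (h𝒜H : ∀ i, 𝒜H i =
      ((𝒜 i ⊓ ker d).comap (ker d).subtype).map ((range d).comap (ker d).subtype).mkQ)
    (hβ : ∀ (y : E) (hy : y ∈ ker d) (hy' : f y ∈ ker d),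
      β (Submodule.Quotient.mk ⟨y, hy⟩) = Submodule.Quotient.mk ⟨f y, hy'⟩)
    [FiniteDimensional K E] (i : ℤ) :
    trace K ↥(𝒜 i ⊓ ker d) (f.restrict (mapsTo_inf_ker hf hdf i)) =
      trace K ↥(𝒜 i ⊓ range d) (f.restrict (mapsTo_inf_range hf hdf i)) +
        trace K (𝒜H i) (β.restrict (mapsTo_homology hf hdf h𝒜H hβ i)) := by
  have hBZ : 𝒜 i ⊓ range d ≤ 𝒜 i ⊓ ker d := by
    rintro _ ⟨hv, w, rfl⟩
    exact ⟨hv, LinearMap.congr_fun hd2 w⟩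
  have hZH : ∀ z : ↥(𝒜 i ⊓ ker d),
      (((range d).comap (ker d).subtype).mkQ ∘ₗ Submodule.inclusion inf_le_right) z ∈ 𝒜H i := by
    intro z
    rw [h𝒜H i]
    exact ⟨_, z.2, rfl⟩
  refine trace_eq_add_of_exact (ι := Submodule.inclusion hBZ)
    (π := codRestrict (𝒜H i) _ hZH) (Submodule.inclusion_injective _) ?_ ?_ (by ext; rfl) ?_
  · rintro ⟨_, hu⟩
    rw [h𝒜H i] at hu
    obtain ⟨⟨y, hy⟩, hyi, rfl⟩ := hu
    exact ⟨⟨y, hyi⟩, rfl⟩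
  · intro z
    simp only [Subtype.ext_iff, codRestrict_apply, comp_apply, Submodule.mkQ_apply,
      Submodule.coe_zero, Submodule.Quotient.mk_eq_zero, Submodule.mem_comap]
    exact ⟨fun hz => ⟨⟨z, z.2.1, hz⟩, rfl⟩, by rintro ⟨b, rfl⟩; exact b.2.2⟩
  · ext z
    exact (hβ z z.2.2 (mapsTo_inf_ker hf hdf i z z.2).2).symm

variable [DirectSum.Decomposition 𝒜] [FiniteDimensional K E]

theorem trace_restrict_eq_trace_cycles_add_trace_boundaries
    (hd : ∀ i, ∀ v ∈ 𝒜 i, d v ∈ 𝒜 (i + 1))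
    (hf : ∀ i, ∀ v ∈ 𝒜 i, f v ∈ 𝒜 i) (hdf : d ∘ₗ f = f ∘ₗ d) (i : ℤ) :
    trace K (𝒜 i) (f.restrict (hf i)) =
      trace K ↥(𝒜 i ⊓ ker d) (f.restrict (mapsTo_inf_ker hf hdf i)) +
        trace K ↥(𝒜 (i + 1) ⊓ range d) (f.restrict (mapsTo_inf_range hf hdf (i + 1))) := by
  refine trace_eq_add_of_exact (ι := Submodule.inclusion inf_le_left)
    (π := d.restrict (p := 𝒜 i) (q := 𝒜 (i + 1) ⊓ range d)
      fun v hv => ⟨hd i v hv, v, rfl⟩)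
    (Submodule.inclusion_injective _) ?_ ?_ (by ext; rfl) ?_
  · rintro ⟨_, hy, w, rfl⟩
    refine ⟨⟨_, SetLike.coe_mem (DirectSum.decompose 𝒜 w i)⟩, Subtype.ext ?_⟩
    exact (decompose_succ_apply_of_degree_one 𝒜 hd w i).symm.trans
      (DirectSum.decompose_of_mem_same 𝒜 hy)
  · refine fun v => ⟨fun hv => ⟨⟨v, v.2, congr_arg Subtype.val hv⟩, rfl⟩, ?_⟩
    rintro ⟨z, rfl⟩
    exact Subtype.ext z.2.2
  · ext v
    exact congr($hdf v)

theorem str_homology_eq_str (hd : ∀ i, ∀ v ∈ 𝒜 i, d v ∈ 𝒜 (i + 1)) (hd2 : d ∘ₗ d = 0)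
    (hf : ∀ i, ∀ v ∈ 𝒜 i, f v ∈ 𝒜 i) (hdf : d ∘ₗ f = f ∘ₗ d)
    (h𝒜H : ∀ i, 𝒜H i =
      ((𝒜 i ⊓ ker d).comap (ker d).subtype).map ((range d).comap (ker d).subtype).mkQ)
    [DirectSum.Decomposition 𝒜H]
    (hβ : ∀ (y : E) (hy : y ∈ ker d) (hy' : f y ∈ ker d),
      β (Submodule.Quotient.mk ⟨y, hy⟩) = Submodule.Quotient.mk ⟨f y, hy'⟩) :
    str K 𝒜H β = str K 𝒜 f := by
  set c : ℤ → K := fun i =>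
    (-1) ^ i * trace K ↥(𝒜 i ⊓ range d) (f.restrict (mapsTo_inf_range hf hdf i))
  have hsplit : ∀ i, (-1 : K) ^ i * trace K (𝒜 i) (f.restrict (hf i)) =
      (-1) ^ i * trace K (𝒜H i) (β.restrict (mapsTo_homology hf hdf h𝒜H hβ i)) +
        (c i - c (i + 1)) := by
    intro i
    rw [trace_restrict_eq_trace_cycles_add_trace_boundaries hd hf hdf,
      trace_cycles_eq_trace_boundaries_add_trace_homology hd2 hf hdf h𝒜H hβ]
    simp only [c, zpow_add_one₀ (by norm_num : (-1 : K) ≠ 0)]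
    ring
  rw [str_eq_finsum_trace_restrict 𝒜H β (mapsTo_homology hf hdf h𝒜H hβ),
    str_eq_finsum_trace_restrict 𝒜 f hf, finsum_congr hsplit,
    finsum_add_sub_succ (finite_support_trace_of_le 𝒜H (fun _ => le_rfl) _ _)
      (finite_support_trace_of_le 𝒜 (fun _ => inf_le_left) _ _)]

end ChainMap

section Brackets

variable {K : Type*} [Field K] {E W : Type*} [AddCommGroup E] [Module K E]
  [AddCommGroup W] [Module K W]

theorem koszulSign_one {n : ℕ} (d : Fin n → ℤ) : koszulSign K 1 d = 1 :=
  Finset.prod_eq_one fun p hp => absurd (Finset.mem_filter.mp hp).2 fun h => by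
    simp only [Equiv.Perm.one_apply] at h; exact lt_asymm h.1 h.2

theorem koszulSign_swap (d : Fin 2 → ℤ) :
    koszulSign K (Equiv.swap 0 1) d = (-1 : K) ^ (d 1 * d 0) := by
  have : Finset.univ.filter (fun p : Fin 2 × Fin 2 =>
      p.1 < p.2 ∧ Equiv.swap 0 1 p.2 < Equiv.swap 0 1 p.1) = {(0, 1)} := by decide
  rw [koszulSign, this, Finset.prod_singleton, Equiv.swap_apply_left, Equiv.swap_apply_right]

variable (l : ∀ n : ℕ, MultilinearMap K (fun _ : Fin n => E) E)
  (Φ : ∀ n : ℕ, MultilinearMap K (fun _ : Fin n => E) W)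

theorem nestedTerm_one (σ : Equiv.Perm (Fin 1)) (x : Fin 1 → E) :
    nestedTerm l Φ 1 0 σ x = Φ 1 ![l 1 ![x (σ 0)]] := by
  refine congrArg (Φ 1) (funext fun a => ?_)
  fin_cases a
  exact congrArg (l 1) (funext fun b => by fin_cases b; rfl)

theorem nestedTerm_two_zero (σ : Equiv.Perm (Fin 2)) (x : Fin 2 → E) :
    nestedTerm l Φ 2 0 σ x = Φ 2 ![l 1 ![x (σ 0)], x (σ 1)] := by
  refine congrArg (Φ 2) (funext fun a => ?_)
  fin_cases a
  · exact congrArg (l 1) (funext fun b => by fin_cases b; rfl)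
  · rfl

theorem nestedTerm_two_one (σ : Equiv.Perm (Fin 2)) (x : Fin 2 → E) :
    nestedTerm l Φ 2 1 σ x = Φ 1 ![l 2 (x ∘ σ)] :=
  congrArg (Φ 1) (funext fun a => by fin_cases a; rfl)

end Brackets

theorem filter_isUnshuffle_one_fin_one :
    Finset.univ.filter (fun σ : Equiv.Perm (Fin 1) => IsUnshuffle 1 σ) = {1} := by
  decide

theorem filter_isUnshuffle_one_fin_two :
    Finset.univ.filter (fun σ : Equiv.Perm (Fin 2) => IsUnshuffle 1 σ) = {1, Equiv.swap 0 1} := by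
  decide

theorem filter_isUnshuffle_two_fin_two :
    Finset.univ.filter (fun σ : Equiv.Perm (Fin 2) => IsUnshuffle 2 σ) = {1} := by
  decide

namespace GradedLieInfty

variable {K : Type*} [Field K] {E : Type*} [AddCommGroup E] [Module K E]
  {𝒜 : ℤ → Submodule K E} (L : GradedLieInfty K E 𝒜) {u v : E} {i j : ℤ}

theorem l_one_mem (hv : v ∈ 𝒜 i) : L.l 1 ![v] ∈ 𝒜 (i + 1) := by
  simpa using L.deg 1 le_rfl (fun _ => i) ![v] fun a => by fin_cases a; exact hv

theorem l_two_mem (hu : u ∈ 𝒜 i) (hv : v ∈ 𝒜 j) : L.l 2 ![u, v] ∈ 𝒜 (i + j + 1) := by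
  simpa [add_assoc] using L.deg 2 (by norm_num) ![i, j] ![u, v] fun a => by
    fin_cases a <;> assumption

theorem l_two_swap (hu : u ∈ 𝒜 i) (hv : v ∈ 𝒜 j) :
    L.l 2 ![v, u] = (-1 : K) ^ (j * i) • L.l 2 ![u, v] := by
  have h := L.symm 2 (by norm_num) (Equiv.swap 0 1) ![i, j] ![u, v] fun a => by
    fin_cases a <;> assumption
  have hswap : (fun a => ![u, v] (Equiv.swap 0 1 a)) = ![v, u] := by
    ext a
    fin_cases a <;> rfl
  simpa [hswap, koszulSign_swap] using h

theorem l_one_l_one (hv : v ∈ 𝒜 i) : L.l 1 ![L.l 1 ![v]] = 0 := by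
  have h := L.jacobi 1 le_rfl (fun _ => i) ![v] fun a => by fin_cases a; exact hv
  simpa [filter_isUnshuffle_one_fin_one, koszulSign_one, nestedTerm_one] using h

theorem l_one_l_two (hu : u ∈ 𝒜 i) (hv : v ∈ 𝒜 j) :
    L.l 2 ![L.l 1 ![u], v] + (-1 : K) ^ (j * i) • L.l 2 ![L.l 1 ![v], u] +
      L.l 1 ![L.l 2 ![u, v]] = 0 := by
  have h := L.jacobi 2 (by norm_num) ![i, j] ![u, v] fun a => by fin_cases a <;> assumption
  simpa [Fin.sum_univ_two, filter_isUnshuffle_one_fin_two, filter_isUnshuffle_two_fin_two,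
    Finset.sum_pair (show (1 : Equiv.Perm (Fin 2)) ≠ Equiv.swap 0 1 by decide),
    koszulSign_one, koszulSign_swap, nestedTerm_two_zero, nestedTerm_two_one] using h

theorem l_one_l_two_of_l_one_eq_zero {x : E} (hx : x ∈ 𝒜 (-1)) (hx1 : L.l 1 ![x] = 0)
    (hv : v ∈ 𝒜 i) : L.l 1 ![L.l 2 ![x, v]] = L.l 2 ![x, L.l 1 ![v]] := by
  have hJ := L.l_one_l_two hx hv
  rw [hx1, (L.l 2).map_coord_zero (m := ![0, v]) 0 rfl, zero_add] at hJ
  have hsign : (-1 : K) ^ (-1 * (i + 1)) = -(-1) ^ (i * -1) := by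
    rw [show -1 * (i + 1) = i * -1 + -1 by ring, zpow_add₀ (by norm_num), zpow_neg_one]
    simp
  rw [L.l_two_swap (L.l_one_mem hv) hx, hsign, neg_smul, eq_neg_of_add_eq_zero_right hJ]

end GradedLieInfty

theorem stmt10_general (K : Type) [Field K] (E : Type) [AddCommGroup E] [Module K E]
    [FiniteDimensional K E] (𝒜 : ℤ → Submodule K E) [DirectSum.Decomposition 𝒜]
    (L : GradedLieInfty K E 𝒜)
    (x : E) (hx : x ∈ 𝒜 (-1))
    (l1 : E →ₗ[K] E) (hl1 : ∀ e : E, l1 e = L.l 1 ![e])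
    (hx1 : l1 x = 0)
    (adx : E →ₗ[K] E) (hadx : ∀ e : E, adx e = L.l 2 ![x, e])
    (𝒜H : ℤ → Submodule K
      ((LinearMap.ker l1) ⧸ ((LinearMap.range l1).comap (LinearMap.ker l1).subtype)))
    (h𝒜H : ∀ i : ℤ, 𝒜H i =
      (((𝒜 i ⊓ LinearMap.ker l1).comap (LinearMap.ker l1).subtype).map
        ((LinearMap.range l1).comap (LinearMap.ker l1).subtype).mkQ))
    [DirectSum.Decomposition 𝒜H]
    (β : ((LinearMap.ker l1) ⧸ ((LinearMap.range l1).comap (LinearMap.ker l1).subtype)) →ₗ[K]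
      ((LinearMap.ker l1) ⧸ ((LinearMap.range l1).comap (LinearMap.ker l1).subtype)))
    (hβ : ∀ (y : E) (hy : y ∈ LinearMap.ker l1) (hy' : adx y ∈ LinearMap.ker l1),
      β (Submodule.Quotient.mk ⟨y, hy⟩) = Submodule.Quotient.mk ⟨adx y, hy'⟩) :
    str K 𝒜H β = str K 𝒜 adx := by
  have hd : ∀ i, ∀ v ∈ 𝒜 i, l1 v ∈ 𝒜 (i + 1) := fun i v hv => hl1 v ▸ L.l_one_mem hv
  have hd2 : l1 ∘ₗ l1 = 0 := DirectSum.decompose_lhom_ext 𝒜 fun i => ext fun ⟨v, hv⟩ => by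
    simp [hl1, L.l_one_l_one hv]
  have hf : ∀ i, ∀ v ∈ 𝒜 i, adx v ∈ 𝒜 i := fun i v hv => by
    simpa [hadx] using L.l_two_mem hx hv
  have hdf : l1 ∘ₗ adx = adx ∘ₗ l1 := DirectSum.decompose_lhom_ext 𝒜 fun i => ext fun ⟨v, hv⟩ => by
    simp [hl1, hadx, L.l_one_l_two_of_l_one_eq_zero hx (by rw [← hl1, hx1]) hv]
  exact str_homology_eq_str hd hd2 hf hdf h𝒜H hβ

/-- for a finite-dimensional Lie `∞`-algebra `E`, the modular
function of the graded Lie algebra `H•(E, l₁)` agrees with the modular function of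
`E` on degree `-1` cocycles: `ω_{H(E,l₁)}([x]) = ω_E(x)` for `x ∈ E_{-1}` with
`l₁ x = 0`.  Here `H = ker l₁ / im l₁` carries the grading `𝒜H` induced by `𝒜`,
`β` is the endomorphism of `H` induced by `ad_x = l₂(x, -)` (which is a chain
map), and both sides are supertraces of adjoint actions. -/
theorem stmt10 (K : Type) [Field K] [CharZero K] (E : Type) [AddCommGroup E] [Module K E]
    [FiniteDimensional K E] (𝒜 : ℤ → Submodule K E) [DirectSum.Decomposition 𝒜]
    (L : GradedLieInfty K E 𝒜)
    (x : E) (hx : x ∈ 𝒜 (-1))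
    (l1 : E →ₗ[K] E) (hl1 : ∀ e : E, l1 e = L.l 1 ![e])
    (hx1 : l1 x = 0)
    (adx : E →ₗ[K] E) (hadx : ∀ e : E, adx e = L.l 2 ![x, e])
    (𝒜H : ℤ → Submodule K
      ((LinearMap.ker l1) ⧸ ((LinearMap.range l1).comap (LinearMap.ker l1).subtype)))
    (h𝒜H : ∀ i : ℤ, 𝒜H i =
      (((𝒜 i ⊓ LinearMap.ker l1).comap (LinearMap.ker l1).subtype).map
        ((LinearMap.range l1).comap (LinearMap.ker l1).subtype).mkQ))
    [DirectSum.Decomposition 𝒜H]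
    (β : ((LinearMap.ker l1) ⧸ ((LinearMap.range l1).comap (LinearMap.ker l1).subtype)) →ₗ[K]
      ((LinearMap.ker l1) ⧸ ((LinearMap.range l1).comap (LinearMap.ker l1).subtype)))
    (hβ : ∀ (y : E) (hy : y ∈ LinearMap.ker l1) (hy' : adx y ∈ LinearMap.ker l1),
      β (Submodule.Quotient.mk ⟨y, hy⟩) = Submodule.Quotient.mk ⟨adx y, hy'⟩) :
    str K 𝒜H β = str K 𝒜 adx :=
  stmt10_general K E 𝒜 L x hx l1 hl1 hx1 adx hadx 𝒜H h𝒜H β hβ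

end
end

section
/- For a Lie algebroid (E, [·,·], ρ) of rank r over a manifold M, given local frames X₁,…,X_n of TM and e₁,…,e_r of E, the function e ↦ div(ρ(e)) − div^{(1)}(e) (where [e, e₁∧…∧e_r] = div^{(1)}(e) e₁∧…∧e_r and [ρ(e), X₁∧…∧X_n] = div(ρ(e)) X₁∧…∧X_n) defines a 1-cocycle for the Lie algebroid differential, i.e. ω([e,f]) = ρ(e)[ω(f)] − ρ(f)[ω(e)] for all sections e, f of E. -/
/-!
In a frame `b`, an additive operator `D` obeying `D (s • m) = s • D m + δ s • m` acts on
coefficient vectors as `c ↦ A_D c + δ c` for a matrix `A_D`, and its divergence is `tr A_D`.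
The matrix of `[D₁, D₂]` is then `[A₁, A₂] + δ₁ A₂ - δ₂ A₁`, and since a commutator of matrices
is traceless, `div [D₁, D₂] = δ₁ (div D₂) - δ₂ (div D₁)`. Applied to `ad_{ρ e}` on vector fields
and to `ad_e` on sections of `E`, together with `ρ ⁅e, f⁆ = ⁅ρ e, ρ f⁆`, this gives the cocycle
identity for both divergences, hence for their difference.
-/

namespace Module.Basis

variable {R M ι : Type*} [CommRing R] [AddCommGroup M] [Module R M] [Fintype ι]
  (b : Module.Basis ι R M)

noncomputable def divergence (D : M →+ M) : R :=
  ∑ k, b.repr (D (b k)) k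

variable {b}

theorem repr_apply_of_leibniz {D : M →+ M} {δ : R → R}
    (hD : ∀ (m : M) (s : R), D (s • m) = s • D m + δ s • m) (m : M) (i : ι) :
    b.repr (D m) i = ∑ j, b.repr m j * b.repr (D (b j)) i + δ (b.repr m i) := by
  classical
  conv_lhs => rw [← b.sum_repr m, map_sum]
  simp [hD, Finsupp.single_apply, Finset.sum_add_distrib]

theorem divergence_commutator {F : Type*} [FunLike F R R] [AddMonoidHomClass F R R]
    {D₁ D₂ : M →+ M} {δ₁ δ₂ : F}
    (hD₁ : ∀ (m : M) (s : R), D₁ (s • m) = s • D₁ m + δ₁ s • m)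
    (hD₂ : ∀ (m : M) (s : R), D₂ (s • m) = s • D₂ m + δ₂ s • m) :
    b.divergence (D₁.comp D₂ - D₂.comp D₁) = δ₁ (b.divergence D₂) - δ₂ (b.divergence D₁) := by
  have htrace_mul_comm : ∑ k, ∑ j, b.repr (D₂ (b k)) j * b.repr (D₁ (b j)) k
      = ∑ k, ∑ j, b.repr (D₁ (b k)) j * b.repr (D₂ (b j)) k := by
    rw [Finset.sum_comm]
    exact Finset.sum_congr rfl fun k _ => Finset.sum_congr rfl fun j _ => mul_comm _ _
  simp only [divergence, AddMonoidHom.sub_apply, AddMonoidHom.comp_apply, map_sub,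
    Finsupp.sub_apply, Finset.sum_sub_distrib]
  rw [Finset.sum_congr rfl fun k _ => repr_apply_of_leibniz hD₁ (D₂ (b k)) k,
    Finset.sum_congr rfl fun k _ => repr_apply_of_leibniz hD₂ (D₁ (b k)) k,
    Finset.sum_add_distrib, Finset.sum_add_distrib, htrace_mul_comm, map_sum, map_sum]
  ring

end Module.Basis

def lieLeft {L : Type*} [LieRing L] (x : L) : L →+ L :=
  AddMonoidHom.mk' (⁅x, ·⁆) (lie_add x)

theorem lieLeft_lie {L : Type*} [LieRing L] (x y : L) :
    lieLeft ⁅x, y⁆ = (lieLeft x).comp (lieLeft y) - (lieLeft y).comp (lieLeft x) := by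
  ext z
  exact lie_lie x y z

theorem Derivation.lie_smul {K R : Type*} [CommRing K] [CommRing R] [Algebra K R]
    (D D' : Derivation K R R) (s : R) : ⁅D, s • D'⁆ = s • ⁅D, D'⁆ + D s • D' := by
  ext a
  simp only [Derivation.commutator_apply, Derivation.add_apply, Derivation.smul_apply,
    Derivation.leibniz, smul_eq_mul]
  ring

theorem Module.Basis.divergence_lieLeft_lie {R L ι F : Type*} [CommRing R] [LieRing L]
    [Module R L] [Fintype ι] [FunLike F R R] [AddMonoidHomClass F R R]
    (b : Module.Basis ι R L) {δ : L → F}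
    (hδ : ∀ (x y : L) (s : R), ⁅x, s • y⁆ = s • ⁅x, y⁆ + δ x s • y) (x y : L) :
    b.divergence (lieLeft ⁅x, y⁆)
      = δ x (b.divergence (lieLeft y)) - δ y (b.divergence (lieLeft x)) := by
  rw [lieLeft_lie]
  exact b.divergence_commutator (hδ x) (hδ y)

/-- for a Lie algebroid `(E, [·,·], ρ)` of rank `r` over a manifold
`M` (modeled algebraically: `R` is the ring of functions, `L` the module of
sections of `E`, the module of vector fields is `Derivation K R R`), given frames
(bases) `X` of the vector fields and `b` of `L`, the function
`ω(e) = div(ρ(e)) - div⁽¹⁾(e)`, where `div(ρ(e)) = ∑ᵢ ⟨Xⁱ, [ρ(e), Xᵢ]⟩` and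
`div⁽¹⁾(e) = ∑ₖ ⟨eᵏ, [e, eₖ]⟩` are the divergences with respect to those frames,
is a 1-cocycle for the Lie algebroid differential:
`ω([e,f]) = ρ(e)[ω(f)] - ρ(f)[ω(e)]`. -/
theorem stmt15 (K R L : Type) [Field K] [CommRing R] [Algebra K R]
    [LieRing L] [Module R L]
    (ρ : L →ₗ[R] Derivation K R R)
    -- Leibniz rule of the anchor
    (hanchor : ∀ (e f : L) (r : R), ⁅e, r • f⁆ = r • ⁅e, f⁆ + (ρ e r) • f)
    -- the anchor is bracket-preserving
    (hmor : ∀ e f : L, ρ ⁅e, f⁆ = ⁅ρ e, ρ f⁆)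
    (n r : ℕ) (X : Module.Basis (Fin n) R (Derivation K R R)) (b : Module.Basis (Fin r) R L)
    (ω : L → R)
    (hω : ∀ e : L,
      ω e = (∑ i : Fin n, (X.repr ⁅ρ e, X i⁆) i) - (∑ k : Fin r, (b.repr ⁅e, b k⁆) k)) :
    ∀ e f : L, ω ⁅e, f⁆ = ρ e (ω f) - ρ f (ω e) := by
  have hω' : ∀ e, ω e = X.divergence (lieLeft (ρ e)) - b.divergence (lieLeft e) := hω
  intro e f
  have hvector := X.divergence_lieLeft_lie (δ := fun D => D) Derivation.lie_smul (ρ e) (ρ f)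
  have hsection := b.divergence_lieLeft_lie hanchor e f
  rw [hω', hω', hω', hmor, map_sub, map_sub]
  linear_combination hvector - hsection
end
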